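/- arXiv:2208.01119 — 2 statements merged into one kernel-verified Lean document; each statement's English description precedes it below -/
import Mathlib

section
/- Let G be a finite directed graph and let u, v be distinct vertices such that the subgraph induced on the set of vertices reachable from u in G with v deleted contains no directed cycle. Then every directed cycle of G passing through u also passes through v; consequently, if S is a directed feedback vertex set with u ∈ S, then (S \ {u}) ∪ {v} is also a directed feedback vertex set of no larger cardinality, and there exists a minimum directed feedback vertex set of G not containing u. -/
/-- The index following `i` cyclically in the list `l`. -/
def cycNext (l : List V) (i : Fin l.length) : Fin l.length :=
  ⟨(i.val + 1) % l.length, Nat.mod_lt _ i.pos⟩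

/-- `l` is a directed cycle of the digraph with edge relation `E`: a nonempty list of
pairwise distinct vertices with an edge from each vertex to the cyclically next one. -/
def IsDicycle (E : V → V → Prop) (l : List V) : Prop :=
  l ≠ [] ∧ l.Nodup ∧ ∀ i : Fin l.length, E (l.get i) (l.get (cycNext l i))

/-- `(u, w)` is a chord of the cycle `l`: an edge between vertices of `l`
that is not one of the cycle's edges. -/
def IsChord (E : V → V → Prop) (l : List V) (u w : V) : Prop :=
  u ∈ l ∧ w ∈ l ∧ E u w ∧
    ∀ i : Fin l.length, ¬(l.get i = u ∧ l.get (cycNext l i) = w)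

/-- `l` is a chordless directed cycle. -/
def IsChordlessDicycle (E : V → V → Prop) (l : List V) : Prop :=
  IsDicycle E l ∧ ∀ u w, ¬ IsChord E l u w

/-- `S` is a directed feedback vertex set: the subgraph induced on the complement
of `S` contains no directed cycle. -/
def IsDFVS (E : V → V → Prop) (S : Set V) : Prop :=
  ¬ ∃ l : List V, IsDicycle (fun a b => E a b ∧ a ∉ S ∧ b ∉ S) l

/-!
If a directed cycle through `u` avoided `v`, all of its vertices would be reachable from `u`
without passing through `v`, so it would be a cycle in the subgraph that is assumed acyclic.
Hence `v` lies on every cycle through `u`, and exchanging `u` for `v` in a feedback vertex set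
still hits every cycle without increasing its size; applied to a minimum feedback vertex set,
this exchange yields one that avoids `u`.
-/

section

variable {V : Type*}

def induced (E : V → V → Prop) (P : V → Prop) : V → V → Prop :=
  fun a b => E a b ∧ P a ∧ P b

namespace IsDicycle

variable {E E' : V → V → Prop} {l : List V}

theorem mono (h : ∀ a b, E a b → E' a b) (hl : IsDicycle E l) : IsDicycle E' l :=
  ⟨hl.1, hl.2.1, fun i => h _ _ (hl.2.2 i)⟩

theorem induced_of_forall_mem {P : V → Prop} (hl : IsDicycle E l) (hP : ∀ x ∈ l, P x) :
    IsDicycle (induced E P) l :=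
  ⟨hl.1, hl.2.1, fun i => ⟨hl.2.2 i, hP _ (l.get_mem _), hP _ (l.get_mem _)⟩⟩

theorem forall_mem_of_induced {P : V → Prop} (hl : IsDicycle (induced E P) l) :
    ∀ x ∈ l, P x := by
  intro x hx
  obtain ⟨i, rfl⟩ := List.mem_iff_get.mp hx
  exact (hl.2.2 i).2.1

theorem reflTransGen_get_mod_add (hl : IsDicycle E l) (i : Fin l.length) (k : ℕ) :
    Relation.ReflTransGen E (l.get i) (l.get ⟨(i + k) % l.length, Nat.mod_lt _ i.pos⟩) := by
  induction k with
  | zero => simpa [Nat.mod_eq_of_lt i.isLt] using .refl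
  | succ k ih =>
    refine ih.tail ?_
    convert hl.2.2 ⟨(i + k) % l.length, Nat.mod_lt _ i.pos⟩ using 3
    simp only [cycNext, Nat.mod_add_mod, Nat.add_assoc]

theorem reflTransGen_of_mem (hl : IsDicycle E l) {a b : V} (ha : a ∈ l) (hb : b ∈ l) :
    Relation.ReflTransGen E a b := by
  obtain ⟨i, rfl⟩ := List.mem_iff_get.mp ha
  obtain ⟨j, rfl⟩ := List.mem_iff_get.mp hb
  convert hl.reflTransGen_get_mod_add i (j + l.length - i) using 3
  have : i + (j + l.length - i) = j + l.length := by omega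
  simp [this, Nat.mod_eq_of_lt j.isLt]

end IsDicycle

theorem mem_of_isDicycle_of_acyclic_reach {E : V → V → Prop} {u v : V}
    (hacyc : ¬ ∃ l, IsDicycle (induced E (Relation.ReflTransGen (induced E (· ≠ v)) u)) l)
    {l : List V} (hl : IsDicycle E l) (hu : u ∈ l) : v ∈ l := by
  by_contra hv
  have hl' : IsDicycle (induced E (· ≠ v)) l :=
    hl.induced_of_forall_mem fun x hx hxv => hv (hxv ▸ hx)
  exact hacyc ⟨l, hl.induced_of_forall_mem fun x hx => hl'.reflTransGen_of_mem hu hx⟩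

theorem isDFVS_univ {E : V → V → Prop} : IsDFVS E Set.univ := by
  rintro ⟨l, hne, -, hedge⟩
  exact (hedge ⟨0, List.length_pos_iff.mpr hne⟩).2.1 trivial

theorem exists_minimum_isDFVS [Finite V] (E : V → V → Prop) :
    ∃ S : Finset V, IsDFVS E ↑S ∧ ∀ T : Finset V, IsDFVS E ↑T → S.card ≤ T.card := by
  have := Fintype.ofFinite V
  obtain ⟨S, hS, hmin⟩ := Set.exists_min_image {S : Finset V | IsDFVS E ↑S} Finset.card
    (Set.toFinite _) ⟨Finset.univ, by simpa using isDFVS_univ⟩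
  exact ⟨S, hS, hmin⟩

theorem IsDFVS.insert_erase [DecidableEq V] {E : V → V → Prop} {u v : V}
    (hdom : ∀ l : List V, IsDicycle E l → u ∈ l → v ∈ l) {S : Finset V} (hS : IsDFVS E ↑S) :
    IsDFVS E ↑(insert v (S.erase u)) := by
  rintro ⟨l, hl⟩
  have havoid := hl.forall_mem_of_induced
  have hlE : IsDicycle E l := hl.mono fun _ _ h => h.1
  have hul : u ∉ l := fun hu => havoid v (hdom l hlE hu) (by simp)
  refine hS ⟨l, hlE.induced_of_forall_mem fun x hx hxS => havoid x hx ?_⟩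
  have hxu : x ≠ u := fun h => hul (h ▸ hx)
  simp [hxu, hxS]

theorem Finset.card_insert_erase_le [DecidableEq V] {S : Finset V} {u : V} (hu : u ∈ S)
    (v : V) : (insert v (S.erase u)).card ≤ S.card :=
  (card_insert_le _ _).trans (card_erase_add_one hu).le

end

theorem vertex_domination_reduction {V : Type*} [Fintype V] [DecidableEq V]
    (E : V → V → Prop) (u v : V) (huv : u ≠ v)
    (hacyc : ¬ ∃ l : List V, IsDicycle
      (fun a b => E a b ∧
        Relation.ReflTransGen (fun x y => E x y ∧ x ≠ v ∧ y ≠ v) u a ∧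
        Relation.ReflTransGen (fun x y => E x y ∧ x ≠ v ∧ y ≠ v) u b) l) :
    (∀ l : List V, IsDicycle E l → u ∈ l → v ∈ l) ∧
    (∀ S : Finset V, IsDFVS E ↑S → u ∈ S →
      IsDFVS E ↑(insert v (S.erase u)) ∧ (insert v (S.erase u)).card ≤ S.card) ∧
    ∃ S : Finset V, IsDFVS E ↑S ∧ u ∉ S ∧
      ∀ T : Finset V, IsDFVS E ↑T → S.card ≤ T.card := by
  have hdom : ∀ l : List V, IsDicycle E l → u ∈ l → v ∈ l :=
    fun _ => mem_of_isDicycle_of_acyclic_reach hacyc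
  refine ⟨hdom, fun S hS hu => ⟨hS.insert_erase hdom, S.card_insert_erase_le hu v⟩, ?_⟩
  obtain ⟨S, hS, hmin⟩ := exists_minimum_isDFVS E
  by_cases hu : u ∈ S
  · exact ⟨insert v (S.erase u), hS.insert_erase hdom, by simp [huv],
      fun T hT => (S.card_insert_erase_le hu v).trans (hmin T hT)⟩
  · exact ⟨S, hS, hu, hmin⟩
end

section
/- Let G be a finite directed graph containing distinct vertices u, m₁, …, m_k, v (k ≥ 1) with edges E u m₁, E m_i m_{i+1} for 1 ≤ i < k, E m_k v, and E u v, where each m_i has exactly one in-neighbor and exactly one out-neighbor in G. Then every directed cycle of G containing some m_i also contains u and v, with u and v non-consecutive on the cycle, so that (u, v) is a chord of it; consequently no chordless directed cycle of G contains any m_i. -/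
/-!
Every `mᵢ` has a unique in- and out-neighbour, so a directed cycle through one `mᵢ` must run
through the whole chain: it enters `m₁` from `u` and leaves `m_k` towards `v`. Hence `u` and `v`
lie on the cycle and the successor of `u` on it is `m₁ ≠ v`, which makes `u → v` a chord.
-/

section

variable {V : Type*}

theorem cycNext_surjective (l : List V) : Function.Surjective (cycNext l) := by
  intro j
  have hn : 0 < l.length := j.pos
  refine ⟨⟨(j.val + l.length - 1) % l.length, Nat.mod_lt _ hn⟩, Fin.ext ?_⟩
  show ((j.val + l.length - 1) % l.length + 1) % l.length = j.val
  rw [Nat.mod_add_mod, Nat.sub_add_cancel (by omega), Nat.add_mod_right,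
    Nat.mod_eq_of_lt j.isLt]

namespace IsDicycle

variable {E : V → V → Prop} {l : List V}

theorem get_injective (hl : IsDicycle E l) : Function.Injective l.get :=
  List.nodup_iff_injective_get.mp hl.2.1

theorem get_cycNext_eq (hl : IsDicycle E l) {j : Fin l.length} {y : V}
    (hout : ∃! x, E (l.get j) x) (hy : E (l.get j) y) : l.get (cycNext l j) = y :=
  hout.unique (hl.2.2 j) hy

theorem exists_cycNext_eq (hl : IsDicycle E l) {j : Fin l.length} {y : V}
    (hin : ∃! x, E x (l.get j)) (hy : E y (l.get j)) :
    ∃ i, l.get i = y ∧ cycNext l i = j := by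
  obtain ⟨i, rfl⟩ := cycNext_surjective l j
  exact ⟨i, hin.unique (hl.2.2 i) hy, rfl⟩

theorem mem_of_edge_of_unique_out (hl : IsDicycle E l) {x y : V} (hx : x ∈ l)
    (hout : ∃! z, E x z) (hy : E x y) : y ∈ l := by
  obtain ⟨j, rfl⟩ := List.mem_iff_get.mp hx
  exact hl.get_cycNext_eq hout hy ▸ List.get_mem l _

theorem mem_of_edge_of_unique_in (hl : IsDicycle E l) {x y : V} (hx : x ∈ l)
    (hin : ∃! z, E z x) (hy : E y x) : y ∈ l := by
  obtain ⟨j, rfl⟩ := List.mem_iff_get.mp hx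
  obtain ⟨i, hi, -⟩ := hl.exists_cycNext_eq hin hy
  exact hi ▸ List.get_mem l i

theorem mem_path_of_mem (hl : IsDicycle E l) {k : ℕ} (m : Fin k → V)
    (hpath : ∀ i : Fin k, ∀ h : i.val + 1 < k, E (m i) (m ⟨i.val + 1, h⟩))
    (hdeg : ∀ i : Fin k, (∃! x, E x (m i)) ∧ (∃! x, E (m i) x))
    {i : Fin k} (hi : m i ∈ l) (j : Fin k) : m j ∈ l := by
  have step : ∀ t (h : t + 1 < k), m ⟨t, by omega⟩ ∈ l ↔ m ⟨t + 1, h⟩ ∈ l := fun t h =>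
    ⟨fun ht => hl.mem_of_edge_of_unique_out ht (hdeg _).2 (hpath _ h),
      fun ht => hl.mem_of_edge_of_unique_in ht (hdeg _).1 (hpath _ h)⟩
  have mem_iff_mem_zero : ∀ j : Fin k, m j ∈ l ↔ m ⟨0, j.pos⟩ ∈ l := by
    rintro ⟨t, ht⟩
    induction t with
    | zero => rfl
    | succ t ih => exact (step t ht).symm.trans (ih _)
  exact (mem_iff_mem_zero j).2 ((mem_iff_mem_zero i).1 hi)

theorem isChord (hl : IsDicycle E l) {u v a : V} (ha : a ∈ l) (hin : ∃! x, E x a)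
    (hua : E u a) (hv : v ∈ l) (huv : E u v) (hav : a ≠ v) : IsChord E l u v := by
  obtain ⟨j, rfl⟩ := List.mem_iff_get.mp ha
  obtain ⟨i, hiu, hij⟩ := hl.exists_cycNext_eq hin hua
  refine ⟨hiu ▸ List.get_mem l i, hv, huv, ?_⟩
  rintro i' ⟨hi'u, hi'v⟩
  obtain rfl : i' = i := hl.get_injective (hi'u.trans hiu.symm)
  exact hav (hij ▸ hi'v)

end IsDicycle

end

theorem chain_reduction_general {V : Type*} (E : V → V → Prop)
    (u v : V) (k : ℕ) (hk : 0 < k) (m : Fin k → V)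
    (hmv : ∀ i, m i ≠ v)
    (e1 : E u (m ⟨0, hk⟩))
    (e2 : ∀ i : Fin k, ∀ h : i.val + 1 < k, E (m i) (m ⟨i.val + 1, h⟩))
    (e3 : E (m ⟨k - 1, Nat.sub_lt hk one_pos⟩) v)
    (e4 : E u v)
    (hdeg : ∀ i : Fin k, (∃! x, E x (m i)) ∧ (∃! x, E (m i) x)) :
    (∀ l : List V, IsDicycle E l → (∃ i, m i ∈ l) → IsChord E l u v) ∧
    (∀ l : List V, IsChordlessDicycle E l → ∀ i, m i ∉ l) := by
  have chord : ∀ l : List V, IsDicycle E l → (∃ i, m i ∈ l) → IsChord E l u v := by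
    rintro l hl ⟨i, hi⟩
    have hv : v ∈ l :=
      hl.mem_of_edge_of_unique_out (hl.mem_path_of_mem m e2 hdeg hi _) (hdeg _).2 e3
    exact hl.isChord (hl.mem_path_of_mem m e2 hdeg hi _) (hdeg _).1 e1 hv e4 (hmv _)
  exact ⟨chord, fun l hl i hi => hl.2 u v (chord l hl.1 ⟨i, hi⟩)⟩

theorem chain_reduction {V : Type*} [Fintype V] (E : V → V → Prop)
    (u v : V) (huv : u ≠ v) (k : ℕ) (hk : 0 < k) (m : Fin k → V)
    (hinj : Function.Injective m) (hmu : ∀ i, m i ≠ u) (hmv : ∀ i, m i ≠ v)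
    (e1 : E u (m ⟨0, hk⟩))
    (e2 : ∀ i : Fin k, ∀ h : i.val + 1 < k, E (m i) (m ⟨i.val + 1, h⟩))
    (e3 : E (m ⟨k - 1, Nat.sub_lt hk one_pos⟩) v)
    (e4 : E u v)
    (hdeg : ∀ i : Fin k, (∃! x, E x (m i)) ∧ (∃! x, E (m i) x)) :
    (∀ l : List V, IsDicycle E l → (∃ i, m i ∈ l) → IsChord E l u v) ∧
    (∀ l : List V, IsChordlessDicycle E l → ∀ i, m i ∉ l) :=
  chain_reduction_general E u v k hk m hmv e1 e2 e3 e4 hdeg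
end
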